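/- arXiv:2307.14033 — 4 statements merged into one kernel-verified Lean document; each statement's English description precedes it below -/
import Mathlib

section
/- For m ≥ 3 odd, the 3-percolation number of the grid P₃ □ Pₘ equals (3/2)(m+1) − 1. -/
open SimpleGraph

/-- The set of vertices eventually infected in `r`-neighbor bootstrap percolation
on the graph `G`, starting from the initially infected set `A`. -/
inductive Infected {V : Type*} (G : SimpleGraph V) (r : ℕ) (A : Set V) : V → Prop
  | init {v : V} : v ∈ A → Infected G r A v
  | step {v : V} (T : Finset V) : r ≤ T.card → (∀ u ∈ T, G.Adj u v) →
      (∀ u ∈ T, Infected G r A u) → Infected G r A v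

/-- `A` is an `r`-percolating set of `G`. -/
def Percolates {V : Type*} (G : SimpleGraph V) (r : ℕ) (A : Set V) : Prop :=
  ∀ v, Infected G r A v

/-- The `r`-percolation number of `G`: minimum size of an `r`-percolating set. -/
noncomputable def percNum (V : Type*) [Fintype V] (G : SimpleGraph V) (r : ℕ) : ℕ :=
  sInf {k | ∃ A : Finset V, A.card = k ∧ Percolates G r (↑A)}

/-- The `n × m` grid graph `Pₙ □ Pₘ`. -/
def gridGraph (n m : ℕ) : SimpleGraph (Fin n × Fin m) :=
  (pathGraph n) □ (pathGraph m)

/-- A boundary vertex of a grid: degree at most 3. -/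
def IsBoundary {V : Type*} (G : SimpleGraph V) (v : V) : Prop :=
  (G.neighborSet v).ncard ≤ 3

/-!
Upper bound: infect the cells `(i, j)` with `i + j` even. Since `m` is odd, all four corners are
among them, so every other vertex has at least three neighbours, all of them infected, and
becomes infected in the first round; there are `2 + 3 (m - 1) / 2` such cells.

Lower bound: if no vertex of a set `U` has three neighbours outside `U`, infection can never enter
`U`, so every percolating set meets `U`. A corner, a column, the two top (or two bottom) cells of
two adjacent columns and the two S-tetrominoes inside two adjacent columns are such sets; hence
column `0` contains two initially infected vertices and any two adjacent columns contain three.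
Grouping the columns as `{0}, {1, 2}, …, {m - 2, m - 1}` gives at least
`2 + 3 (m - 1) / 2 = 3 (m + 1) / 2 - 1` of them.
-/

open Finset

section Bootstrap

variable {V : Type*} {G : SimpleGraph V} {r : ℕ}

def IsBootstrapClosed (G : SimpleGraph V) (r : ℕ) (W : Set V) : Prop :=
  ∀ v ∉ W, ∀ T : Finset V, (∀ u ∈ T, G.Adj u v ∧ u ∈ W) → T.card < r

theorem Infected.mem_of_isBootstrapClosed {A W : Set V} (hW : IsBootstrapClosed G r W)
    (hAW : A ⊆ W) {v : V} (hv : Infected G r A v) : v ∈ W := by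
  induction hv with
  | init h => exact hAW h
  | step T hT hadj _ ih =>
    by_contra hv
    exact (hW _ hv T fun u hu => ⟨hadj u hu, ih u hu⟩).not_ge hT

theorem Percolates.exists_mem_of_isBootstrapClosed_compl {A U : Set V}
    (hA : Percolates G r A) (hU : IsBootstrapClosed G r Uᶜ) {v : V} (hv : v ∈ U) :
    ∃ a ∈ A, a ∈ U := by
  by_contra! h
  exact (hA v).mem_of_isBootstrapClosed hU h hv

theorem percolates_three_of [DecidableEq V] {A : Set V}
    (h : ∀ v ∉ A, ∃ a ∈ A, ∃ b ∈ A, ∃ c ∈ A,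
      G.Adj a v ∧ G.Adj b v ∧ G.Adj c v ∧ a ≠ b ∧ a ≠ c ∧ b ≠ c) :
    Percolates G 3 A := by
  intro v
  by_cases hv : v ∈ A
  · exact .init hv
  obtain ⟨a, ha, b, hb, c, hc, hav, hbv, hcv, hab, hac, hbc⟩ := h v hv
  refine .step {a, b, c} (card_eq_three.2 ⟨a, b, c, hab, hac, hbc, rfl⟩).ge ?_ ?_
  · simp only [mem_insert, mem_singleton]
    rintro u (rfl | rfl | rfl) <;> assumption
  · simp only [mem_insert, mem_singleton]
    rintro u (rfl | rfl | rfl) <;> exact .init ‹_›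

theorem percNum_eq_of [Fintype V] {n : ℕ} (A₀ : Finset V) (hA₀ : Percolates G r A₀)
    (hcard : A₀.card ≤ n) (hlow : ∀ A : Finset V, Percolates G r A → n ≤ A.card) :
    percNum V G r = n := by
  unfold percNum
  exact le_antisymm (le_trans (Nat.sInf_le ⟨A₀, rfl, hA₀⟩) hcard)
    (le_csInf ⟨_, A₀, rfl, hA₀⟩ fun _ ⟨A, hA, hperc⟩ => hA ▸ hlow A hperc)

end Bootstrap

section Grid

variable {m : ℕ}

theorem gridGraph_adj_iff {n : ℕ} {u v : Fin n × Fin m} :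
    (gridGraph n m).Adj u v ↔
      (u.2.val = v.2.val ∧ (u.1.val + 1 = v.1.val ∨ v.1.val + 1 = u.1.val)) ∨
      (u.1.val = v.1.val ∧ (u.2.val + 1 = v.2.val ∨ v.2.val + 1 = u.2.val)) := by
  simp only [gridGraph, boxProd_adj, pathGraph_adj, Fin.ext_iff]
  tauto

def numNbrsOutside (m : ℕ) (P : ℕ → ℕ → Prop) [∀ i j, Decidable (P i j)] (i j : ℕ) : ℕ :=
  (if 0 < i ∧ ¬P (i - 1) j then 1 else 0) + (if i + 1 < 3 ∧ ¬P (i + 1) j then 1 else 0) +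
    (if 0 < j ∧ ¬P i (j - 1) then 1 else 0) + (if j + 1 < m ∧ ¬P i (j + 1) then 1 else 0)

theorem isBootstrapClosed_gridGraph {P : ℕ → ℕ → Prop} [∀ i j, Decidable (P i j)]
    (h : ∀ i j, i < 3 → j < m → P i j → numNbrsOutside m P i j ≤ 2) :
    IsBootstrapClosed (gridGraph 3 m) 3 {v | P v.1 v.2}ᶜ := by
  rintro ⟨⟨i, hi⟩, ⟨j, hj⟩⟩ hv T hT
  simp only [Set.mem_compl_iff, Set.mem_ofPred_eq, not_not] at hv
  let slot (c : Prop) [Decidable c] (p : ℕ × ℕ) : Finset (ℕ × ℕ) := {x ∈ {p} | c}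
  have card_slot (c : Prop) [Decidable c] (p : ℕ × ℕ) :
      (slot c p).card = if c then 1 else 0 := by
    simp only [slot, card_filter, sum_singleton]
  have hsub : T.image (Prod.map Fin.val Fin.val) ⊆
      slot (0 < i ∧ ¬P (i - 1) j) (i - 1, j) ∪ slot (i + 1 < 3 ∧ ¬P (i + 1) j) (i + 1, j) ∪
        slot (0 < j ∧ ¬P i (j - 1)) (i, j - 1) ∪ slot (j + 1 < m ∧ ¬P i (j + 1)) (i, j + 1) := by
    intro x hx
    obtain ⟨⟨⟨i', hi'⟩, ⟨j', hj'⟩⟩, ha, rfl⟩ := mem_image.1 hx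
    obtain ⟨hadj, hP⟩ := hT _ ha
    simp only [gridGraph_adj_iff, Set.mem_compl_iff, Set.mem_ofPred_eq] at hadj hP
    simp only [slot, mem_union, mem_filter, mem_singleton, Prod.map, Prod.ext_iff]
    rcases hadj with ⟨rfl, rfl | rfl⟩ | ⟨rfl, rfl | rfl⟩
    · exact .inl (.inl (.inl ⟨⟨rfl, rfl⟩, by omega, hP⟩))
    · exact .inl (.inl (.inr ⟨⟨rfl, rfl⟩, hi', hP⟩))
    · exact .inl (.inr ⟨⟨rfl, rfl⟩, by omega, hP⟩)
    · exact .inr ⟨⟨rfl, rfl⟩, hj', hP⟩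
  calc T.card = (T.image (Prod.map Fin.val Fin.val)).card :=
        (card_image_of_injective _ (Fin.val_injective.prodMap Fin.val_injective)).symm
    _ ≤ _ := card_le_card hsub
    _ ≤ _ := (card_union_le _ _).trans (Nat.add_le_add_right ((card_union_le _ _).trans
          (Nat.add_le_add_right (card_union_le _ _) _)) _)
    _ ≤ 2 := by simpa only [numNbrsOutside, card_slot] using h i j hi hj hv
    _ < 3 := by norm_num

theorem Percolates.exists_mem_gridGraph {A : Finset (Fin 3 × Fin m)}
    (hA : Percolates (gridGraph 3 m) 3 ↑A) (P : ℕ → ℕ → Prop) [∀ i j, Decidable (P i j)]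
    (hP : ∀ i j, i < 3 → j < m → P i j → numNbrsOutside m P i j ≤ 2)
    (hne : ∃ i j, i < 3 ∧ j < m ∧ P i j) : ∃ a ∈ A, P a.1 a.2 := by
  obtain ⟨i, j, hi, hj, hij⟩ := hne
  exact hA.exists_mem_of_isBootstrapClosed_compl (isBootstrapClosed_gridGraph hP)
    (v := (⟨i, hi⟩, ⟨j, hj⟩)) hij

end Grid

section Columns

variable {m : ℕ}

def colCount (A : Finset (Fin 3 × Fin m)) (j : ℕ) : ℕ := (A.filter fun v => v.2.val = j).card

theorem card_eq_sum_colCount (A : Finset (Fin 3 × Fin m)) :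
    A.card = ∑ j ∈ range m, colCount A j :=
  card_eq_sum_card_fiberwise fun v _ => mem_range.2 v.2.isLt

variable {A : Finset (Fin 3 × Fin m)}

theorem two_le_colCount_zero (hA : Percolates (gridGraph 3 m) 3 ↑A) (hm : 0 < m) :
    2 ≤ colCount A 0 := by
  obtain ⟨a, ha, hra, hca⟩ := hA.exists_mem_gridGraph (fun i j => i = 0 ∧ j = 0)
    (fun _ _ _ _ _ => by unfold numNbrsOutside; split_ifs <;> omega)
    ⟨0, 0, by omega, hm, rfl, rfl⟩
  obtain ⟨b, hb, hrb, hcb⟩ := hA.exists_mem_gridGraph (fun i j => i = 2 ∧ j = 0)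
    (fun _ _ _ _ _ => by unfold numNbrsOutside; split_ifs <;> omega)
    ⟨2, 0, by omega, hm, rfl, rfl⟩
  refine one_lt_card.2 ⟨a, mem_filter.2 ⟨ha, hca⟩, b, mem_filter.2 ⟨hb, hcb⟩, ?_⟩
  rintro rfl
  omega

theorem three_le_colCount_add (hA : Percolates (gridGraph 3 m) 3 ↑A) {j : ℕ} (hj : j + 1 < m) :
    3 ≤ colCount A j + colCount A (j + 1) := by
  obtain ⟨x, hx, hxc⟩ := hA.exists_mem_gridGraph (fun _ j' => j' = j)
    (fun _ _ _ _ _ => by unfold numNbrsOutside; split_ifs <;> omega)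
    ⟨0, j, by omega, by omega, rfl⟩
  obtain ⟨y, hy, hyc⟩ := hA.exists_mem_gridGraph (fun _ j' => j' = j + 1)
    (fun _ _ _ _ _ => by unfold numNbrsOutside; split_ifs <;> omega)
    ⟨0, j + 1, by omega, hj, rfl⟩
  obtain ⟨t, ht, htc⟩ := hA.exists_mem_gridGraph (fun i j' => i = 0 ∧ (j' = j ∨ j' = j + 1))
    (fun _ _ _ _ _ => by unfold numNbrsOutside; split_ifs <;> omega)
    ⟨0, j, by omega, by omega, rfl, .inl rfl⟩
  obtain ⟨b, hb, hbc⟩ := hA.exists_mem_gridGraph (fun i j' => i = 2 ∧ (j' = j ∨ j' = j + 1))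
    (fun _ _ _ _ _ => by unfold numNbrsOutside; split_ifs <;> omega)
    ⟨2, j, by omega, by omega, rfl, .inl rfl⟩
  obtain ⟨s₁, hs₁, hs₁c⟩ := hA.exists_mem_gridGraph
    (fun i j' => (j' = j ∧ 1 ≤ i) ∨ (j' = j + 1 ∧ i ≤ 1))
    (fun _ _ _ _ _ => by unfold numNbrsOutside; split_ifs <;> omega)
    ⟨1, j, by omega, by omega, .inl ⟨rfl, le_rfl⟩⟩
  obtain ⟨s₂, hs₂, hs₂c⟩ := hA.exists_mem_gridGraph
    (fun i j' => (j' = j ∧ i ≤ 1) ∨ (j' = j + 1 ∧ 1 ≤ i))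
    (fun _ _ _ _ _ => by unfold numNbrsOutside; split_ifs <;> omega)
    ⟨1, j, by omega, by omega, .inl ⟨rfl, le_rfl⟩⟩
  have hdisj : Disjoint (A.filter fun v => v.2.val = j) (A.filter fun v => v.2.val = j + 1) :=
    disjoint_filter.2 fun _ _ h h' => by omega
  rw [colCount, colCount, ← card_union_of_disjoint hdisj, ← filter_or]
  -- no two vertices of the two columns meet all six sets found above
  by_contra! hlt
  have hxy : x ≠ y := by rintro rfl; omega
  have hX : (A.filter fun v => v.2.val = j ∨ v.2.val = j + 1) = {x, y} :=
    (eq_of_subset_of_card_le (insert_subset_iff.2 ⟨mem_filter.2 ⟨hx, .inl hxc⟩,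
      singleton_subset_iff.2 (mem_filter.2 ⟨hy, .inr hyc⟩)⟩)
      (by rw [card_pair hxy]; omega)).symm
  have eq_or_eq : ∀ z ∈ A, (z.2.val = j ∨ z.2.val = j + 1) → z = x ∨ z = y := by
    intro z hz hzc
    have hzX : z ∈ A.filter fun v => v.2.val = j ∨ v.2.val = j + 1 := mem_filter.2 ⟨hz, hzc⟩
    simpa [hX] using hzX
  have ht' := eq_or_eq t ht (by omega)
  have hb' := eq_or_eq b hb (by omega)
  have hs₁' := eq_or_eq s₁ hs₁ (by omega)
  have hs₂' := eq_or_eq s₂ hs₂ (by omega)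
  simp only [Prod.ext_iff, ← Fin.val_inj] at ht' hb' hs₁' hs₂'
  omega

end Columns

theorem sum_range_two_mul_add_one {M : Type*} [AddCommMonoid M] (c : ℕ → M) (k : ℕ) :
    ∑ j ∈ range (2 * k + 1), c j = c 0 + ∑ t ∈ range k, (c (2 * t + 1) + c (2 * t + 2)) := by
  induction k with
  | zero => simp
  | succ k ih =>
    rw [show 2 * (k + 1) + 1 = 2 * k + 1 + 1 + 1 by ring, sum_range_succ, sum_range_succ, ih,
      sum_range_succ, add_assoc, add_assoc]

theorem three_mul_add_two_le_card {k : ℕ} {A : Finset (Fin 3 × Fin (2 * k + 1))}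
    (hA : Percolates (gridGraph 3 (2 * k + 1)) 3 ↑A) : 3 * k + 2 ≤ A.card := by
  have hpairs :
      ∑ t ∈ range k, 3 ≤ ∑ t ∈ range k, (colCount A (2 * t + 1) + colCount A (2 * t + 2)) :=
    sum_le_sum fun t ht => three_le_colCount_add hA (by rw [mem_range] at ht; omega)
  rw [sum_const, card_range, smul_eq_mul] at hpairs
  rw [card_eq_sum_colCount, sum_range_two_mul_add_one]
  linarith [two_le_colCount_zero hA (by omega)]

def checkerboard (m : ℕ) : Finset (Fin 3 × Fin m) :=
  univ.filter fun v => (v.1.val + v.2.val) % 2 = 0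

theorem colCount_checkerboard {m j : ℕ} (hj : j < m) :
    colCount (checkerboard m) j = if j % 2 = 1 then 1 else 2 := by
  have hcol : (checkerboard m).filter (fun v => v.2.val = j) =
      (univ.filter fun i : Fin 3 => (i.val + j) % 2 = 0).image fun i => (i, ⟨j, hj⟩) := by
    ext ⟨i, j'⟩
    simp only [checkerboard, mem_filter, mem_univ, true_and, mem_image, Prod.ext_iff]
    constructor
    · rintro ⟨h, rfl⟩
      exact ⟨i, h, rfl, rfl⟩
    · rintro ⟨i', h, rfl, rfl⟩
      exact ⟨h, rfl⟩
  rw [colCount, hcol, card_image_of_injective _ fun _ _ h => (Prod.ext_iff.1 h).1]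
  rcases Nat.mod_two_eq_zero_or_one j with h | h <;> simp [Nat.add_mod, h] <;> decide

theorem card_checkerboard (k : ℕ) : (checkerboard (2 * k + 1)).card = 3 * k + 2 := by
  have hpair : ∀ t ∈ range k, colCount (checkerboard (2 * k + 1)) (2 * t + 1) +
      colCount (checkerboard (2 * k + 1)) (2 * t + 2) = 3 := fun t ht => by
    rw [mem_range] at ht
    rw [colCount_checkerboard (by omega), colCount_checkerboard (by omega), if_pos (by omega),
      if_neg (by omega)]
  rw [card_eq_sum_colCount, sum_range_two_mul_add_one, sum_congr rfl hpair,
    colCount_checkerboard (by omega), if_neg (by omega), sum_const, card_range, smul_eq_mul]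
  ring

theorem checkerboard_percolates {m : ℕ} (hm : 3 ≤ m) (hodd : Odd m) :
    Percolates (gridGraph 3 m) 3 ↑(checkerboard m) := by
  refine percolates_three_of ?_
  rintro ⟨⟨i, hi⟩, ⟨j, hj⟩⟩ hv
  obtain ⟨k, rfl⟩ := hodd
  simp only [checkerboard, coe_filter, mem_univ, true_and, Set.mem_ofPred_eq] at hv ⊢
  by_cases hi1 : i = 1
  · obtain ⟨j', hj', hparity, hadj⟩ :
        ∃ j', ∃ _ : j' < 2 * k + 1, j' % 2 = 1 ∧ (j' + 1 = j ∨ j + 1 = j') :=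
      if h : j + 1 < 2 * k + 1 then ⟨j + 1, h, by omega⟩ else ⟨j - 1, by omega, by omega⟩
    refine ⟨(⟨0, by omega⟩, ⟨j, hj⟩), ?_, (⟨2, by omega⟩, ⟨j, hj⟩), ?_,
      (⟨1, by omega⟩, ⟨j', hj'⟩), ?_⟩ <;>
      simp only [gridGraph_adj_iff, ne_eq, Prod.ext_iff, ← Fin.val_inj, true_and] <;> omega
  · refine ⟨(⟨1, by omega⟩, ⟨j, hj⟩), ?_, (⟨i, hi⟩, ⟨j - 1, by omega⟩), ?_,
      (⟨i, hi⟩, ⟨j + 1, by omega⟩), ?_⟩ <;>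
      simp only [gridGraph_adj_iff, ne_eq, Prod.ext_iff, ← Fin.val_inj, true_and, or_true] <;>
      omega

theorem stmt_5 (m : ℕ) (hm : 3 ≤ m) (hodd : Odd m) :
    percNum (Fin 3 × Fin m) (gridGraph 3 m) 3 = 3 * (m + 1) / 2 - 1 := by
  obtain ⟨k, rfl⟩ := hodd
  refine percNum_eq_of (checkerboard _) (checkerboard_percolates hm ⟨k, rfl⟩) ?_
    fun A hA => ?_
  · rw [card_checkerboard]
    omega
  · have := three_mul_add_two_le_card hA
    omega
end

section
/- For m ≥ 5 odd, the 3-percolation number of the grid P₅ □ Pₘ equals 2m + 2. -/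
open SimpleGraph

/-! Lower bound: infecting a vertex adds one vertex and at least three edges to the subgraph
spanned by the infected set, so `3 * #S - e(S)` never increases. Comparing the initial set `A`
with the whole grid, which has `9m - 5` edges, gives `3 * #A ≥ 15m - (9m - 5)`, i.e.
`#A ≥ 2m + 2`.

Upper bound: infect rows 0 and 4 in the even columns, rows 1 and 3 in the odd columns, and both ends
of the middle row; as `m` is odd, the first and last columns are even. Every other vertex off the
middle row then has three initially infected neighbours, and the middle row fills in from left to
right. -/

open Finset

namespace SimpleGraph

theorem card_edgeFinset_pathGraph (n : ℕ) [Fintype (pathGraph n).edgeSet] :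
    #(pathGraph n).edgeFinset = n - 1 := by
  cases n with
  | zero => simp [Subsingleton.elim (pathGraph 0) ⊥]
  | succ n =>
    have hinj : Function.Injective fun i : Fin n => s(i.castSucc, i.succ) := fun i j h => by
      simp_all [Fin.ext_iff]
      omega
    have hedges : (pathGraph (n + 1)).edgeFinset =
        univ.image fun i : Fin n => s(i.castSucc, i.succ) := by
      ext e
      induction e using Sym2.ind with
      | h a b =>
        simp only [mem_edgeFinset, mem_edgeSet, pathGraph_adj, mem_image, mem_univ, true_and,
          Fin.exists_iff, Sym2.eq_iff, Fin.ext_iff, Fin.val_castSucc, Fin.val_succ]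
        constructor
        · rintro (h | h)
          exacts [⟨a, by omega, .inl ⟨rfl, h⟩⟩, ⟨b, by omega, .inr ⟨rfl, h⟩⟩]
        · rintro ⟨i, -, ⟨rfl, h⟩ | ⟨rfl, h⟩⟩ <;> omega
    rw [hedges, card_image_of_injective _ hinj, card_univ, Fintype.card_fin, Nat.add_sub_cancel]

theorem card_edgeFinset_boxProd {α β : Type*} [Fintype α] [Fintype β]
    (G : SimpleGraph α) (H : SimpleGraph β) [Fintype G.edgeSet] [Fintype H.edgeSet]
    [Fintype (G □ H).edgeSet] :
    #(G □ H).edgeFinset = Fintype.card β * #G.edgeFinset + Fintype.card α * #H.edgeFinset := by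
  classical
  have h : 2 * #(G □ H).edgeFinset = ∑ x : α × β, (G.degree x.1 + H.degree x.2) := by
    convert (G □ H).sum_degrees_eq_twice_card_edges.symm using 2 with x
    · convert rfl
    · convert (degree_boxProd x).symm
  simp only [Fintype.sum_prod_type, sum_add_distrib] at h
  rw [sum_comm] at h
  simp only [Finset.sum_const, Finset.card_univ, smul_eq_mul,
    G.sum_degrees_eq_twice_card_edges, H.sum_degrees_eq_twice_card_edges] at h
  simp only [edgeFinset_card, Fintype.card_eq_nat_card] at h ⊢
  linarith

theorem card_edgeFinset_inter_sym2_add_le_insert {V : Type*} [DecidableEq V] {G : SimpleGraph V}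
    [Fintype G.edgeSet] {S T : Finset V} {v : V} (hv : v ∉ S) (hTS : T ⊆ S)
    (hadj : ∀ u ∈ T, G.Adj u v) :
    #(G.edgeFinset ∩ S.sym2) + #T ≤ #(G.edgeFinset ∩ (insert v S).sym2) := by
  have hdisj : Disjoint (G.edgeFinset ∩ S.sym2) (T.image (s(·, v))) := by
    refine Finset.disjoint_left.2 fun e he he' => ?_
    obtain ⟨u, -, rfl⟩ := mem_image.1 he'
    exact hv (mk_mem_sym2_iff.1 (mem_inter.1 he).2).2
  calc #(G.edgeFinset ∩ S.sym2) + #T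
      = #((G.edgeFinset ∩ S.sym2) ∪ T.image (s(·, v))) := by
        rw [card_union_of_disjoint hdisj, card_image_of_injective _ fun u w => Sym2.congr_left.1]
    _ ≤ #(G.edgeFinset ∩ (insert v S).sym2) := by
        refine card_le_card (union_subset (inter_subset_inter_left (sym2_mono (subset_insert ..)))
          (image_subset_iff.2 fun u hu => mem_inter.2 ⟨mem_edgeFinset.2 (hadj u hu), ?_⟩))
        exact mk_mem_sym2_iff.2 ⟨mem_insert_of_mem (hTS hu), mem_insert_self ..⟩

end SimpleGraph

theorem gridGraph_adj {n m : ℕ} {x y : Fin n × Fin m} :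
    (gridGraph n m).Adj x y ↔
      (x.1.val + 1 = y.1.val ∨ y.1.val + 1 = x.1.val) ∧ x.2 = y.2 ∨
        (x.2.val + 1 = y.2.val ∨ y.2.val + 1 = x.2.val) ∧ x.1 = y.1 := by
  simp [gridGraph, boxProd_adj, pathGraph_adj]

theorem card_edgeFinset_gridGraph (n m : ℕ) [Fintype (gridGraph n m).edgeSet] :
    #(gridGraph n m).edgeFinset = m * (n - 1) + n * (m - 1) := by
  classical
  have := card_edgeFinset_boxProd (pathGraph n) (pathGraph m)
  simp only [card_edgeFinset_pathGraph, Fintype.card_fin] at this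
  simp only [edgeFinset_card, Fintype.card_eq_nat_card] at this ⊢
  exact this

theorem Infected.of_three_adj {V : Type*} [DecidableEq V] {G : SimpleGraph V} {A : Set V}
    {a b c v : V} (hab : a ≠ b) (hac : a ≠ c) (hbc : b ≠ c)
    (ha : G.Adj a v) (hb : G.Adj b v) (hc : G.Adj c v)
    (ia : Infected G 3 A a) (ib : Infected G 3 A b) (ic : Infected G 3 A c) :
    Infected G 3 A v :=
  .step {a, b, c} (card_eq_three.2 ⟨a, b, c, hab, hac, hbc, rfl⟩).ge (by simp [ha, hb, hc])
    (by simp [ia, ib, ic])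

theorem Percolates.mul_card_le {V : Type*} [Fintype V] [DecidableEq V] {G : SimpleGraph V}
    [DecidableRel G.Adj] {r : ℕ} {A : Finset V} (hA : Percolates G r A) :
    r * Fintype.card V ≤ r * #A + #G.edgeFinset := by
  -- A maximal set obeying the edge-count invariant is closed under infection, so it is everything.
  obtain ⟨S, ⟨hAS, hS⟩, hmax⟩ := Set.Finite.exists_maximalFor card
    {S : Finset V | A ⊆ S ∧ r * #S ≤ r * #A + #(G.edgeFinset ∩ S.sym2)} (Set.toFinite _)
    ⟨A, subset_rfl, by omega⟩
  have hS_univ : ∀ v, v ∈ S := fun v => by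
    induction hA v with
    | init hv => exact hAS hv
    | @step v T hT hadj _ ih =>
      by_contra hv
      have hedges := card_edgeFinset_inter_sym2_add_le_insert hv ih hadj
      have hcard := card_insert_of_notMem hv
      have hSv : A ⊆ insert v S ∧
          r * #(insert v S) ≤ r * #A + #(G.edgeFinset ∩ (insert v S).sym2) :=
        ⟨hAS.trans (subset_insert ..), by rw [hcard, mul_add_one]; omega⟩
      have := hmax hSv (by omega)
      omega
  rwa [eq_univ_of_forall hS_univ, sym2_univ, inter_univ, card_univ] at hS

theorem Percolates.three_mul_card_ge_gridGraph {n m : ℕ} (hn : 1 ≤ n) (hm : 1 ≤ m)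
    {A : Finset (Fin n × Fin m)} (hA : Percolates (gridGraph n m) 3 A) :
    n * m + n + m ≤ 3 * #A := by
  classical
  have := hA.mul_card_le
  rw [card_edgeFinset_gridGraph, Fintype.card_prod, Fintype.card_fin, Fintype.card_fin] at this
  obtain ⟨n, rfl⟩ := Nat.exists_eq_add_of_le' hn
  obtain ⟨m, rfl⟩ := Nat.exists_eq_add_of_le' hm
  simp only [Nat.add_sub_cancel] at this
  linarith

theorem percNum_eq_of_forall_le {V : Type*} [Fintype V] {G : SimpleGraph V} {r k : ℕ}
    {A : Finset V} (hA : Percolates G r A) (hcard : #A = k)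
    (hmin : ∀ B : Finset V, Percolates G r B → k ≤ #B) : percNum V G r = k :=
  le_antisymm (Nat.sInf_le ⟨A, hcard, hA⟩)
    (le_csInf ⟨k, A, hcard, hA⟩ fun _ ⟨B, hB, hpB⟩ => hB ▸ hmin B hpB)

def zigzagSeed (m : ℕ) : Finset (Fin 5 × Fin m) :=
  {v | v.2.val % 2 = 0 ∧ (v.1.val = 0 ∨ v.1.val = 4) ∨
    v.2.val % 2 = 1 ∧ (v.1.val = 1 ∨ v.1.val = 3) ∨
    v.1.val = 2 ∧ (v.2.val = 0 ∨ v.2.val = m - 1)}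

section Zigzag

variable {m : ℕ}

theorem card_zigzagSeed (hm : 1 < m) : #(zigzagSeed m) = 2 * m + 2 := by
  have hends : #{j : Fin m | j.val = 0 ∨ j.val = m - 1} = 2 := by
    rw [show ({j : Fin m | j.val = 0 ∨ j.val = m - 1} : Finset (Fin m)) =
      {⟨0, by omega⟩, ⟨m - 1, by omega⟩} by ext; simp [Fin.ext_iff]]
    exact card_pair (by simp [Fin.ext_iff]; omega)
  calc #(zigzagSeed m)
      = ∑ j : Fin m, (2 + if j.val = 0 ∨ j.val = m - 1 then 1 else 0) := by
        rw [zigzagSeed, card_filter, Fintype.sum_prod_type_right]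
        refine sum_congr rfl fun j _ => ?_
        simp only [Fin.sum_univ_five]
        split_ifs <;> simp_all
    _ = 2 * m + 2 := by
        rw [sum_add_distrib, sum_boole, hends]
        simp [mul_comm]

theorem infected_zigzagSeed_off_middle (hm : 1 < m) (hodd : Odd m) {o k : Fin 5}
    (hok : o.val = 0 ∧ k.val = 1 ∨ o.val = 4 ∧ k.val = 3) (j : Fin m) :
    Infected (gridGraph 5 m) 3 (zigzagSeed m) (o, j) ∧
      Infected (gridGraph 5 m) 3 (zigzagSeed m) (k, j) := by
  have hmod : m % 2 = 1 := Nat.odd_iff.1 hodd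
  have hj := j.isLt
  have seed : ∀ v ∈ zigzagSeed m, Infected (gridGraph 5 m) 3 (zigzagSeed m) v :=
    fun v hv => .init hv
  rcases Nat.mod_two_eq_zero_or_one j with hjeven | hjodd
  · refine ⟨seed _ ?_, ?_⟩
    · simp [zigzagSeed]; omega
    by_cases h0 : j.val = 0
    · refine .of_three_adj (a := (o, j)) (b := (2, j)) (c := (k, ⟨1, hm⟩))
        ?_ ?_ ?_ ?_ ?_ ?_ (seed _ ?_) (seed _ ?_) (seed _ ?_) <;>
      simp [gridGraph_adj, zigzagSeed, Prod.ext_iff, Fin.ext_iff, -Fin.val_eq_zero_iff] <;> omega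
    by_cases h1 : j.val = m - 1
    · refine .of_three_adj (a := (o, j)) (b := (2, j)) (c := (k, ⟨j - 1, by omega⟩))
        ?_ ?_ ?_ ?_ ?_ ?_ (seed _ ?_) (seed _ ?_) (seed _ ?_) <;>
      simp [gridGraph_adj, zigzagSeed, Prod.ext_iff, Fin.ext_iff, -Fin.val_eq_zero_iff] <;> omega
    · refine .of_three_adj (a := (o, j)) (b := (k, ⟨j - 1, by omega⟩))
        (c := (k, ⟨j + 1, by omega⟩)) ?_ ?_ ?_ ?_ ?_ ?_ (seed _ ?_) (seed _ ?_) (seed _ ?_) <;>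
      simp [gridGraph_adj, zigzagSeed, Prod.ext_iff, Fin.ext_iff, -Fin.val_eq_zero_iff] <;> omega
  · refine ⟨?_, seed _ ?_⟩
    · refine .of_three_adj (a := (k, j)) (b := (o, ⟨j - 1, by omega⟩))
        (c := (o, ⟨j + 1, by omega⟩)) ?_ ?_ ?_ ?_ ?_ ?_ (seed _ ?_) (seed _ ?_) (seed _ ?_) <;>
      simp [gridGraph_adj, zigzagSeed, Prod.ext_iff, Fin.ext_iff, -Fin.val_eq_zero_iff] <;> omega
    · simp [zigzagSeed]; omega

theorem infected_zigzagSeed_middle (hm : 1 < m) (hodd : Odd m) (j : Fin m) :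
    Infected (gridGraph 5 m) 3 (zigzagSeed m) (2, j) := by
  obtain ⟨j, hj⟩ := j
  induction j with
  | zero => exact .init (by simp [zigzagSeed])
  | succ j ih =>
    have h01 := infected_zigzagSeed_off_middle hm hodd (o := 0) (k := 1) (by decide) ⟨j + 1, hj⟩
    have h43 := infected_zigzagSeed_off_middle hm hodd (o := 4) (k := 3) (by decide) ⟨j + 1, hj⟩
    refine .of_three_adj (a := (2, ⟨j, by omega⟩)) (b := (1, ⟨j + 1, hj⟩))
      (c := (3, ⟨j + 1, hj⟩)) ?_ ?_ ?_ ?_ ?_ ?_ (ih (by omega)) h01.2 h43.2 <;>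
    simp [gridGraph_adj, Prod.ext_iff, Fin.ext_iff, -Fin.val_eq_zero_iff]

theorem percolates_zigzagSeed (hm : 1 < m) (hodd : Odd m) :
    Percolates (gridGraph 5 m) 3 (zigzagSeed m) := by
  rintro ⟨i, j⟩
  have h01 := infected_zigzagSeed_off_middle hm hodd (o := 0) (k := 1) (by decide) j
  have h43 := infected_zigzagSeed_off_middle hm hodd (o := 4) (k := 3) (by decide) j
  fin_cases i
  exacts [h01.1, h01.2, infected_zigzagSeed_middle hm hodd j, h43.2, h43.1]

end Zigzag

theorem stmt_7 (m : ℕ) (hm : 5 ≤ m) (hodd : Odd m) :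
    percNum (Fin 5 × Fin m) (gridGraph 5 m) 3 = 2 * m + 2 := by
  refine percNum_eq_of_forall_le (percolates_zigzagSeed (by omega) hodd)
    (card_zigzagSeed (by omega)) fun B hB => ?_
  have := hB.three_mul_card_ge_gridGraph (by norm_num) (by omega)
  omega
end

section
/- For m ≥ 6 even, the 3-percolation number of the grid P₅ □ Pₘ equals 2m + 3. -/
open SimpleGraph

/-!
Lower bound: when a vertex becomes infected it has at least three infected neighbours, so the
number of edges inside the infected set grows by at least 3 per step. Starting from `A`, this
gives `6 (5m - |A|) ≤ 2e(P₅ □ Pₘ) - 2e(A) = 18m - 10 - 2e(A)`. A vertex of a boundary row has at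
most three neighbours, so along row 0 (and row 4) the seeds contain both corners and one of any
two consecutive vertices; as `m` is even, they contain two adjacent vertices. Hence `2e(A) ≥ 4`,
i.e. `6|A| ≥ 12m + 14`.

Upper bound: seed rows 0 and 4 at the even columns and the last column, rows 1 and 3 at the odd
columns, and the vertex `(2, 0)`. Rows 0 and 4 fill up first, then rows 1 and 3, and finally
row 2 from left to right.
-/

open Finset

namespace SimpleGraph

variable {V : Type*} {G : SimpleGraph V}

theorem card_le_degree_of_forall_adj [Fintype V] [DecidableRel G.Adj] {x : V} {T : Finset V}
    (hT : ∀ u ∈ T, G.Adj u x) : #T ≤ G.degree x := by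
  rw [← card_neighborFinset_eq_degree]
  exact card_le_card fun u hu => (G.mem_neighborFinset _ _).2 (hT u hu).symm

theorem mem_of_adj_of_degree_le_card [Fintype V] [DecidableRel G.Adj] {x y : V} {T : Finset V}
    (hT : ∀ u ∈ T, G.Adj u x) (hcard : G.degree x ≤ #T) (hxy : G.Adj x y) : y ∈ T := by
  have hsub : T ⊆ G.neighborFinset x := fun u hu => (G.mem_neighborFinset _ _).2 (hT u hu).symm
  rw [eq_of_subset_of_card_le hsub (by rwa [card_neighborFinset_eq_degree])]
  exact (G.mem_neighborFinset _ _).2 hxy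

/-- Twice the number of edges of `G` with both ends in `S`. -/
def innerDegreeSum [DecidableRel G.Adj] (S : Finset V) : ℕ := ∑ x ∈ S, #{y ∈ S | G.Adj x y}

section innerDegreeSum

variable [DecidableRel G.Adj]

theorem innerDegreeSum_univ [Fintype V] : G.innerDegreeSum univ = ∑ x, G.degree x := by
  simp only [innerDegreeSum, ← card_neighborFinset_eq_degree, neighborFinset_eq_filter]

theorem innerDegreeSum_insert [DecidableEq V] {S : Finset V} {v : V} (hv : v ∉ S) :
    G.innerDegreeSum (insert v S) = G.innerDegreeSum S + 2 * #{y ∈ S | G.Adj v y} := by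
  have hrow : ∀ x ∈ S,
      #{y ∈ insert v S | G.Adj x y} = #{y ∈ S | G.Adj x y} + if G.Adj x v then 1 else 0 := by
    intro x _
    rw [filter_insert]
    split_ifs
    · exact card_insert_of_notMem fun h => hv (mem_of_mem_filter _ h)
    · rfl
  have hcol : ∑ x ∈ S, (if G.Adj x v then 1 else 0) = #{y ∈ S | G.Adj v y} := by
    simp_rw [G.adj_comm _ v]; exact (card_filter _ _).symm
  rw [innerDegreeSum, sum_insert hv, filter_insert, if_neg (G.irrefl), sum_congr rfl hrow,
    sum_add_distrib, hcol, innerDegreeSum]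
  ring

theorem card_filter_exists_adj_le_innerDegreeSum (S : Finset V) :
    #{x ∈ S | ∃ y ∈ S, G.Adj x y} ≤ G.innerDegreeSum S := by
  rw [card_eq_sum_ones, sum_filter]
  refine sum_le_sum fun x _ => ?_
  split_ifs with h
  · obtain ⟨y, hy, hxy⟩ := h
    exact card_pos.2 ⟨y, mem_filter.2 ⟨hy, hxy⟩⟩
  · exact Nat.zero_le _

end innerDegreeSum

end SimpleGraph

open SimpleGraph

namespace Infected

variable {V : Type*} {G : SimpleGraph V} {r : ℕ} {A : Set V}

theorem mem_of_closed {C : Set V} (hAC : A ⊆ C)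
    (hC : ∀ v (T : Finset V), r ≤ #T → (∀ u ∈ T, G.Adj u v) → (↑T : Set V) ⊆ C → v ∈ C)
    {v : V} (h : Infected G r A v) : v ∈ C := by
  induction h with
  | init hv => exact hAC hv
  | step T hT hadj _ ih => exact hC _ T hT hadj ih

theorem of_three [DecidableEq V] {v u₁ u₂ u₃ : V} (h₁₂ : u₁ ≠ u₂) (h₁₃ : u₁ ≠ u₃) (h₂₃ : u₂ ≠ u₃)
    (a₁ : G.Adj u₁ v) (a₂ : G.Adj u₂ v) (a₃ : G.Adj u₃ v)
    (i₁ : Infected G 3 A u₁) (i₂ : Infected G 3 A u₂) (i₃ : Infected G 3 A u₃) :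
    Infected G 3 A v :=
  step {u₁, u₂, u₃} (card_eq_three.2 ⟨_, _, _, h₁₂, h₁₃, h₂₃, rfl⟩).ge (by simp [a₁, a₂, a₃])
    (by simp [i₁, i₂, i₃])

theorem exists_card_adj_ge_of_notMem {S : Finset V} (hAS : A ⊆ S) [DecidableRel G.Adj] {v : V}
    (h : Infected G r A v) (hv : v ∉ S) : ∃ u ∉ S, r ≤ #{y ∈ S | G.Adj u y} := by
  induction h with
  | init hA => exact absurd (hAS hA) hv
  | @step w T hT hadj _ ih =>
    by_cases hTS : ∃ u ∈ T, u ∉ S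
    · obtain ⟨u, huT, huS⟩ := hTS
      exact ih u huT huS
    · refine ⟨w, hv, hT.trans (card_le_card fun u hu => mem_filter.2 ⟨?_, (hadj u hu).symm⟩)⟩
      by_contra huS
      exact hTS ⟨u, hu, huS⟩

variable [Fintype V] [DecidableRel G.Adj]

theorem mem_of_degree_lt {v : V} (h : Infected G r A v) (hdeg : G.degree v < r) : v ∈ A := by
  cases h with
  | init hv => exact hv
  | step T hT hadj _ => exact absurd (hT.trans (card_le_degree_of_forall_adj hadj)) (not_le.2 hdeg)

theorem not_of_adj_of_notMem {v w : V} (hvw : G.Adj v w) (hv : v ∉ A) (hw : w ∉ A)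
    (hdv : G.degree v ≤ r) (hdw : G.degree w ≤ r) : ¬ Infected G r A v := fun h =>
  -- `{v, w}ᶜ` is closed: a vertex of degree at most `r` is only infected after all its neighbours.
  have hC : v ∈ {x | x ≠ v ∧ x ≠ w} := by
    refine h.mem_of_closed (C := {x | x ≠ v ∧ x ≠ w})
      (fun x hx => ⟨ne_of_mem_of_not_mem hx hv, ne_of_mem_of_not_mem hx hw⟩) ?_
    rintro x T hT hadj hTC
    constructor <;> rintro rfl
    · exact (hTC (mem_of_adj_of_degree_le_card hadj (hdv.trans hT) hvw)).2 rfl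
    · exact (hTC (mem_of_adj_of_degree_le_card hadj (hdw.trans hT) hvw.symm)).1 rfl
  hC.1 rfl

end Infected

theorem Percolates.innerDegreeSum_add_le {V : Type*} [Fintype V] [DecidableEq V]
    {G : SimpleGraph V} [DecidableRel G.Adj] {r : ℕ} {A S : Finset V}
    (hA : Percolates G r ↑A) (hAS : A ⊆ S) :
    G.innerDegreeSum S + 2 * r * Fintype.card V ≤ ∑ x, G.degree x + 2 * r * #S := by
  rw [← innerDegreeSum_univ]
  induction hk : Fintype.card V - #S generalizing S with
  | zero =>
    rw [eq_univ_of_card S (by have := card_le_univ S; omega), card_univ]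
  | succ k ih =>
    obtain ⟨v, hv⟩ : ∃ v, v ∉ S := by
      by_contra! h
      rw [eq_univ_of_forall h, card_univ] at hk
      omega
    obtain ⟨u, hu, hru⟩ := (hA v).exists_card_adj_ge_of_notMem (coe_subset.2 hAS) hv
    have := ih (hAS.trans (subset_insert u S)) (by rw [card_insert_of_notMem hu]; omega)
    rw [innerDegreeSum_insert hu, card_insert_of_notMem hu] at this
    nlinarith

instance (n : ℕ) : DecidableRel (pathGraph n).Adj := fun _ _ =>
  decidable_of_iff _ pathGraph_adj.symm

instance (n m : ℕ) : DecidableRel (gridGraph n m).Adj := fun _ _ =>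
  decidable_of_iff _ boxProd_adj.symm

theorem Fin.card_filter_val_eq {n : ℕ} (c : ℕ) :
    #{u : Fin n | u.val = c} = if c < n then 1 else 0 := by
  split_ifs with h
  · exact card_eq_one.2 ⟨⟨c, h⟩, by ext; simp [Fin.ext_iff]⟩
  · exact card_eq_zero.2 (filter_eq_empty_iff.2 fun u _ hu => h (hu ▸ u.isLt))

theorem pathGraph_degree {n : ℕ} (j : Fin n) :
    (pathGraph n).degree j = (if j.val + 1 < n then 1 else 0) + (if 0 < j.val then 1 else 0) := by
  have hsplit : (pathGraph n).neighborFinset j =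
      ({u | u.val = j.val + 1} : Finset (Fin n)) ∪
        ({u | u.val = j.val - 1 ∧ 0 < j.val} : Finset (Fin n)) := by
    ext u
    simp only [mem_neighborFinset, pathGraph_adj, mem_union, mem_filter, mem_univ, true_and]
    omega
  rw [← card_neighborFinset_eq_degree, hsplit, card_union_of_disjoint, Fin.card_filter_val_eq]
  · congr 1
    by_cases hj : 0 < j.val
    · simp only [hj, and_true, if_true, Fin.card_filter_val_eq,
        if_pos (show j.val - 1 < n by omega)]
    · simp [hj]
  · exact disjoint_filter.2 fun u _ h₁ h₂ => by omega

theorem sum_pathGraph_degree {n : ℕ} (hn : 0 < n) : ∑ j, (pathGraph n).degree j = 2 * (n - 1) := by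
  simp only [pathGraph_degree, sum_add_distrib, ← card_filter]
  have hlast : #{j : Fin n | j.val + 1 < n} = n - 1 := by
    simpa [Nat.lt_sub_iff_add_lt] using Fin.card_filter_val_lt (n := n) (m := n - 1)
  have hfirst : #{j : Fin n | 0 < j.val} = n - 1 := by
    have h := card_filter_add_card_filter_not (s := (univ : Finset (Fin n))) (fun j => j.val < 1)
    rw [Fin.card_filter_val_lt, card_univ, Fintype.card_fin] at h
    simp only [not_lt, Nat.one_le_iff_ne_zero, Nat.pos_iff_ne_zero] at h ⊢
    omega
  omega

theorem gridGraph_degree {n m : ℕ} (x : Fin n × Fin m)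
    [inst : Fintype ((gridGraph n m).neighborSet x)] :
    (gridGraph n m).degree x = (pathGraph n).degree x.1 + (pathGraph m).degree x.2 :=
  @degree_boxProd _ _ (pathGraph n) (pathGraph m) x _ _ inst

theorem sum_gridGraph_degree {m : ℕ} (hm : 0 < m) :
    ∑ x, (gridGraph 5 m).degree x = 18 * m - 10 := by
  calc ∑ x, (gridGraph 5 m).degree x
      = ∑ i, ∑ j, ((pathGraph 5).degree i + (pathGraph m).degree j) :=
        (sum_congr rfl fun x _ => gridGraph_degree x).trans
          (Fintype.sum_prod_type' fun i j => (pathGraph 5).degree i + (pathGraph m).degree j)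
    _ = 18 * m - 10 := by
      simp only [sum_add_distrib, Finset.sum_const, card_univ, Fintype.card_fin, smul_eq_mul,
        ← Finset.mul_sum, sum_pathGraph_degree hm, sum_pathGraph_degree (show 0 < 5 by norm_num)]
      omega

theorem gridGraph_adj_of_succ_col {n m : ℕ} (i : Fin n) {a b : Fin m} (h : a.val + 1 = b.val) :
    (gridGraph n m).Adj (i, a) (i, b) :=
  boxProd_adj.2 (Or.inr ⟨pathGraph_adj.2 (Or.inl h), rfl⟩)

theorem gridGraph_adj_of_succ_row {n m : ℕ} (j : Fin m) {a b : Fin n} (h : a.val + 1 = b.val) :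
    (gridGraph n m).Adj (a, j) (b, j) :=
  boxProd_adj.2 (Or.inl ⟨pathGraph_adj.2 (Or.inl h), rfl⟩)

theorem Nat.exists_consecutive_of_even {p : ℕ → Prop} {m : ℕ} (hm : Even m) (hpos : 0 < m)
    (h0 : p 0) (hlast : p (m - 1)) (hcover : ∀ t, t + 1 < m → p t ∨ p (t + 1)) :
    ∃ t, t + 1 < m ∧ p t ∧ p (t + 1) := by
  by_contra! hno
  have hparity : ∀ t < m, p t ↔ Even t := by
    intro t
    induction t with
    | zero => simp [h0]
    | succ t ih =>
      intro ht
      have := ih (by omega)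
      have := hcover t ht
      have := hno t ht
      rw [Nat.even_add_one]
      tauto
  have hodd : ¬ Even (m - 1) := by
    rintro ⟨l, hl⟩
    obtain ⟨k, hk⟩ := hm
    omega
  exact hodd ((hparity _ (by omega)).1 hlast)

theorem Percolates.exists_adj_pair_of_degree_eq_one {m : ℕ} (hm : 2 ≤ m) (heven : Even m)
    {A : Finset (Fin 5 × Fin m)} (hA : Percolates (gridGraph 5 m) 3 ↑A) {i : Fin 5}
    (hi : (pathGraph 5).degree i = 1) :
    ∃ t, ∃ ht : t + 1 < m, (i, (⟨t, by omega⟩ : Fin m)) ∈ A ∧ (i, (⟨t + 1, ht⟩ : Fin m)) ∈ A := by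
  have hdeg (j : Fin m) : (gridGraph 5 m).degree (i, j) =
      1 + ((if j.val + 1 < m then 1 else 0) + (if 0 < j.val then 1 else 0)) := by
    rw [gridGraph_degree, hi, pathGraph_degree]
  have hcorner (t : ℕ) (ht : t < m) (hend : t = 0 ∨ t = m - 1) : (i, (⟨t, ht⟩ : Fin m)) ∈ A :=
    (hA _).mem_of_degree_lt (by rw [hdeg]; dsimp only; split_ifs <;> omega)
  obtain ⟨t, ht, ⟨_, h₁⟩, ⟨_, h₂⟩⟩ :=
    Nat.exists_consecutive_of_even (p := fun t => ∃ h : t < m, (i, (⟨t, h⟩ : Fin m)) ∈ A) heven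
      (by omega) ⟨_, hcorner 0 (by omega) (.inl rfl)⟩
      ⟨_, hcorner (m - 1) (by omega) (.inr rfl)⟩ fun t ht => by
        by_contra! hgap
        refine Infected.not_of_adj_of_notMem (gridGraph_adj_of_succ_col i (b := ⟨t + 1, ht⟩) rfl)
          (hgap.1 (by omega)) (hgap.2 ht) ?_ ?_ (hA _) <;>
        · rw [hdeg]; split_ifs <;> omega
  exact ⟨t, ht, h₁, h₂⟩

theorem Percolates.four_le_innerDegreeSum {m : ℕ} (hm : 2 ≤ m) (heven : Even m)
    {A : Finset (Fin 5 × Fin m)} (hA : Percolates (gridGraph 5 m) 3 ↑A) :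
    4 ≤ (gridGraph 5 m).innerDegreeSum A := by
  obtain ⟨s, hs, hs₁, hs₂⟩ := hA.exists_adj_pair_of_degree_eq_one hm heven (i := 0)
    (by rw [pathGraph_degree]; rfl)
  obtain ⟨t, ht, ht₁, ht₂⟩ := hA.exists_adj_pair_of_degree_eq_one hm heven (i := 4)
    (by rw [pathGraph_degree]; rfl)
  refine le_trans ?_ (card_filter_exists_adj_le_innerDegreeSum A)
  calc 4 = #({(0, ⟨s, by omega⟩), (0, ⟨s + 1, hs⟩), (4, ⟨t, by omega⟩), (4, ⟨t + 1, ht⟩)} :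
        Finset (Fin 5 × Fin m)) := by
        symm
        rw [card_eq_four]
        exact ⟨_, _, _, _, by simp, by simp, by simp, by simp, by simp, by simp, rfl⟩
    _ ≤ _ := card_le_card ?_
  simp only [insert_subset_iff, singleton_subset_iff, mem_filter]
  exact ⟨⟨hs₁, _, hs₂, gridGraph_adj_of_succ_col 0 rfl⟩,
    ⟨hs₂, _, hs₁, (gridGraph_adj_of_succ_col 0 rfl).symm⟩,
    ⟨ht₁, _, ht₂, gridGraph_adj_of_succ_col 4 rfl⟩,
    ⟨ht₂, _, ht₁, (gridGraph_adj_of_succ_col 4 rfl).symm⟩⟩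

theorem Percolates.two_mul_add_three_le_card {m : ℕ} (hm : 2 ≤ m) (heven : Even m)
    {A : Finset (Fin 5 × Fin m)} (hA : Percolates (gridGraph 5 m) 3 ↑A) : 2 * m + 3 ≤ #A := by
  have hmono := hA.innerDegreeSum_add_le (subset_refl A)
  rw [sum_gridGraph_degree (by omega), Fintype.card_prod, Fintype.card_fin, Fintype.card_fin]
    at hmono
  have := hA.four_le_innerDegreeSum hm heven
  omega

section gridSeed

variable {m : ℕ}

def gridSeed (m : ℕ) : Finset (Fin 5 × Fin m) :=
  {x | ((x.1 = 0 ∨ x.1 = 4) ∧ (Even x.2.val ∨ x.2.val + 1 = m)) ∨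
    ((x.1 = 1 ∨ x.1 = 3) ∧ ¬ Even x.2.val) ∨ (x.1 = 2 ∧ x.2.val = 0)}

theorem card_gridSeed_le (m : ℕ) : #(gridSeed m) ≤ 2 * m + 3 := by
  let evens : Finset (Fin m) := {j | Even j.val}
  let odds : Finset (Fin m) := {j | ¬ Even j.val}
  let last : Finset (Fin m) := {j | j.val + 1 = m}
  let first : Finset (Fin m) := {j | j.val = 0}
  have hsub : gridSeed m ⊆ ({0, 4} ×ˢ (evens ∪ last) ∪ {1, 3} ×ˢ odds) ∪ {2} ×ˢ first := by
    intro x hx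
    simp only [gridSeed, mem_filter, mem_univ, true_and] at hx
    simp only [evens, odds, last, first, mem_union, mem_product, mem_insert, mem_singleton,
      mem_filter, mem_univ, true_and]
    tauto
  have hpart : #evens + #odds = m := by
    rw [card_filter_add_card_filter_not, card_univ, Fintype.card_fin]
  have hlast : #last ≤ 1 := card_le_one.2 fun a ha b hb => by
    simp only [last, mem_filter] at ha hb; omega
  have hfirst : #first ≤ 1 := card_le_one.2 fun a ha b hb => by
    simp only [first, mem_filter] at ha hb; omega
  have houter : #(({0, 4} : Finset (Fin 5)) ×ˢ (evens ∪ last)) ≤ 2 * (#evens + #last) := by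
    rw [card_product]
    exact Nat.mul_le_mul (by decide) (card_union_le _ _)
  have hinner : #(({1, 3} : Finset (Fin 5)) ×ˢ odds) = 2 * #odds := by
    rw [card_product]
    rfl
  have hmiddle : #(({2} : Finset (Fin 5)) ×ˢ first) ≤ 1 := by
    rwa [card_product, card_singleton, one_mul]
  have := (card_le_card hsub).trans <| (card_union_le _ _).trans <|
    add_le_add_left (card_union_le _ _) _
  omega

theorem mem_gridSeed_of_outer {i : Fin 5} (hi : i = 0 ∨ i = 4) {j : Fin m}
    (hj : Even j.val ∨ j.val + 1 = m) : (i, j) ∈ gridSeed m := by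
  rcases hi with rfl | rfl <;> simp [gridSeed, hj]

theorem mem_gridSeed_of_inner {i : Fin 5} (hi : i = 1 ∨ i = 3) {j : Fin m} (hj : Odd j.val) :
    (i, j) ∈ gridSeed m := by
  rcases hi with rfl | rfl <;> simp [gridSeed, hj]

theorem mem_gridSeed_two_zero {j : Fin m} (hj : j.val = 0) : (2, j) ∈ gridSeed m := by
  simp [gridSeed, hj]

theorem infected_gridSeed_outer {o n : Fin 5} (ho : o = 0 ∨ o = 4) (hn : n = 1 ∨ n = 3)
    (hno : (pathGraph 5).Adj n o) (j : Fin m) :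
    Infected (gridGraph 5 m) 3 ↑(gridSeed m) (o, j) := by
  obtain ⟨t, ht⟩ := j
  by_cases hseed : Even t ∨ t + 1 = m
  · exact .init (mem_gridSeed_of_outer ho hseed)
  rw [not_or, Nat.not_even_iff_odd] at hseed
  obtain ⟨⟨k, rfl⟩, hlast⟩ := hseed
  refine Infected.of_three (u₁ := (o, ⟨2 * k, by omega⟩)) (u₂ := (o, ⟨2 * k + 2, by omega⟩))
    (u₃ := (n, ⟨2 * k + 1, ht⟩)) ?_ ?_ ?_ (gridGraph_adj_of_succ_col o rfl)
    (gridGraph_adj_of_succ_col o rfl).symm (boxProd_adj.2 (.inl ⟨hno, rfl⟩))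
    (.init (mem_gridSeed_of_outer ho (.inl (even_two_mul k))))
    (.init (mem_gridSeed_of_outer ho (.inl (by simp [Nat.even_add_one]))))
    (.init (mem_gridSeed_of_inner hn (by simp)))
  all_goals simp [Prod.ext_iff, hno.ne.symm]

theorem infected_gridSeed_inner (heven : Even m) {o n : Fin 5} (ho : o = 0 ∨ o = 4)
    (hn : n = 1 ∨ n = 3) (hno : (pathGraph 5).Adj n o) (hn2 : (pathGraph 5).Adj n 2) (j : Fin m) :
    Infected (gridGraph 5 m) 3 ↑(gridSeed m) (n, j) := by
  have ho2 : o ≠ 2 := by rcases ho with rfl | rfl <;> decide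
  obtain ⟨t, ht⟩ := j
  rcases Nat.even_or_odd t with ⟨k, rfl⟩ | hodd
  · obtain ⟨l, rfl⟩ := heven
    rcases k with _ | k
    · refine Infected.of_three (u₁ := (o, ⟨0, ht⟩)) (u₂ := (2, ⟨0, ht⟩)) (u₃ := (n, ⟨1, by omega⟩))
        ?_ ?_ ?_ (boxProd_adj.2 (.inl ⟨hno.symm, rfl⟩)) (boxProd_adj.2 (.inl ⟨hn2.symm, rfl⟩))
        (gridGraph_adj_of_succ_col n rfl).symm (.init (mem_gridSeed_of_outer ho (by simp)))
        (.init (mem_gridSeed_two_zero rfl)) (.init (mem_gridSeed_of_inner hn (by simp)))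
      all_goals simp [Prod.ext_iff, hno.ne.symm, hn2.ne.symm, ho2]
    · refine Infected.of_three (u₁ := (o, ⟨k + 1 + (k + 1), ht⟩))
        (u₂ := (n, ⟨2 * k + 1, by omega⟩)) (u₃ := (n, ⟨2 * k + 3, by omega⟩))
        ?_ ?_ ?_ (boxProd_adj.2 (.inl ⟨hno.symm, rfl⟩))
        (gridGraph_adj_of_succ_col n (by simp; omega))
        (gridGraph_adj_of_succ_col n (by simp; omega)).symm
        (.init (mem_gridSeed_of_outer ho (by simp))) (.init (mem_gridSeed_of_inner hn (by simp)))
        (.init (mem_gridSeed_of_inner hn ⟨k + 1, by ring⟩))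
      all_goals simp [Prod.ext_iff, hno.ne.symm]
  · exact .init (mem_gridSeed_of_inner hn hodd)

theorem gridSeed_percolates (heven : Even m) : Percolates (gridGraph 5 m) 3 ↑(gridSeed m) := by
  have row0 := infected_gridSeed_outer (m := m) (o := 0) (n := 1) (by simp) (by simp) (by decide)
  have row4 := infected_gridSeed_outer (m := m) (o := 4) (n := 3) (by simp) (by simp) (by decide)
  have row1 := infected_gridSeed_inner heven (o := 0) (n := 1) (by simp) (by simp) (by decide)
    (by decide)
  have row3 := infected_gridSeed_inner heven (o := 4) (n := 3) (by simp) (by simp) (by decide)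
    (by decide)
  have row2 (t : ℕ) (ht : t < m) : Infected (gridGraph 5 m) 3 ↑(gridSeed m) (2, ⟨t, ht⟩) := by
    induction t with
    | zero => exact .init (mem_gridSeed_two_zero rfl)
    | succ t ih =>
      exact Infected.of_three (u₁ := (2, ⟨t, by omega⟩)) (u₂ := (1, ⟨t + 1, ht⟩))
        (u₃ := (3, ⟨t + 1, ht⟩)) (by simp [Prod.ext_iff]) (by simp [Prod.ext_iff])
        (by simp [Prod.ext_iff]) (gridGraph_adj_of_succ_col 2 rfl) (gridGraph_adj_of_succ_row _ rfl)
        (gridGraph_adj_of_succ_row _ rfl).symm (ih (by omega)) (row1 _) (row3 _)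
  rintro ⟨i, j⟩
  fin_cases i
  exacts [row0 j, row1 j, row2 j.val j.isLt, row3 j, row4 j]

end gridSeed

theorem percNum_eq {V : Type*} [Fintype V] {G : SimpleGraph V} {r k : ℕ} {A : Finset V}
    (hA : Percolates G r ↑A) (hAk : #A ≤ k) (hmin : ∀ B : Finset V, Percolates G r ↑B → k ≤ #B) :
    percNum V G r = k := by
  have hmem : #A ∈ {k | ∃ B : Finset V, #B = k ∧ Percolates G r ↑B} := ⟨A, rfl, hA⟩
  refine le_antisymm ((Nat.sInf_le hmem).trans hAk) (le_csInf ⟨_, hmem⟩ ?_)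
  rintro _ ⟨B, rfl, hB⟩
  exact hmin B hB

theorem stmt_8 (m : ℕ) (hm : 6 ≤ m) (heven : Even m) :
    percNum (Fin 5 × Fin m) (gridGraph 5 m) 3 = 2 * m + 3 :=
  percNum_eq (gridSeed_percolates heven) (card_gridSeed_le m)
    fun _ hB => hB.two_mul_add_three_le_card (by omega) heven
end

section
/- In the grid G = P₄ □ Pₘ (m ≥ 4) with columns V₁, …, Vₘ (each of size 4), any minimum 3-percolating set S containing no three consecutive boundary vertices satisfies: (a) |S ∩ V₁| ≥ 3 and |S ∩ Vₘ| ≥ 3; (b) |S ∩ Vᵢ| ≥ 1 for 2 ≤ i ≤ m−1; (c) |S ∩ (Vᵢ ∪ Vᵢ₊₁)| ≥ 3 for 2 ≤ i ≤ m−1; (d) |S ∩ (Vᵢ ∪ Vᵢ₊₁ ∪ Vᵢ₊₂)| ≥ 5 for 2 ≤ i ≤ m−2. -/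
open SimpleGraph

namespace P16
open Finset

lemma grid_adj {m : ℕ} (u v : Fin 4 × Fin m) :
    (gridGraph 4 m).Adj u v ↔
      ((u.1 : ℕ) = v.1 ∧ ((u.2 : ℕ) + 1 = v.2 ∨ (v.2 : ℕ) + 1 = u.2)) ∨
      ((u.2 : ℕ) = v.2 ∧ ((u.1 : ℕ) + 1 = v.1 ∨ (v.1 : ℕ) + 1 = u.1)) := by
  show ((pathGraph 4) □ (pathGraph m)).Adj u v ↔ _
  rw [SimpleGraph.boxProd_adj, pathGraph_adj, pathGraph_adj]
  simp only [Fin.ext_iff]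
  tauto

/-! ### Global iteration -/

variable {V : Type*} (G : SimpleGraph V)

def It (A : Set V) : ℕ → Set V
  | 0 => A
  | (k+1) => It A k ∪
      {v | ∃ T : Finset V, 3 ≤ T.card ∧ ∀ u ∈ T, G.Adj u v ∧ u ∈ It A k}

lemma It_succ_mono (A : Set V) (k : ℕ) : It G A k ⊆ It G A (k+1) := fun v hv =>
  Or.inl hv

lemma It_mono (A : Set V) {k l : ℕ} (h : k ≤ l) : It G A k ⊆ It G A l := by
  induction l with
  | zero => simp_all
  | succ l ih =>
    rcases Nat.lt_or_ge k (l+1) with h' | h'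
    · exact (ih (Nat.lt_succ_iff.mp h')).trans (It_succ_mono G A l)
    · have : k = l + 1 := le_antisymm h h'
      subst this; exact fun _ h => h

lemma infected_exists {A : Set V} {v : V} (h : Infected G 3 A v) :
    ∃ k, v ∈ It G A k := by
  induction h with
  | init hv => exact ⟨0, hv⟩
  | @step v T hT hadj hinf ih =>
    -- pick, for each u ∈ T, a stage; take the max
    have : ∃ K : ℕ, ∀ u ∈ T, u ∈ It G A K := by
      classical
      choose f hf using fun (u : T) => ih u u.2
      rcases T.eq_empty_or_nonempty with rfl | hne
      · exact ⟨0, by simp⟩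
      · refine ⟨(T.attach.image f).max' (by simpa using hne), ?_⟩
        intro u hu
        exact It_mono G A
          (Finset.le_max' _ _ (Finset.mem_image.mpr ⟨⟨u, hu⟩, Finset.mem_attach _ _, rfl⟩))
          (hf ⟨u, hu⟩)
    rcases this with ⟨K, hK⟩
    exact ⟨K + 1, Or.inr ⟨T, hT, fun u hu => ⟨hadj u hu, hK u hu⟩⟩⟩

/-! ### Block closure -/

def Adjb {w : ℕ} (b b' : Fin 4 × Fin w) : Prop :=
  ((b.1 : ℕ) = b'.1 ∧ ((b.2 : ℕ) + 1 = b'.2 ∨ (b'.2 : ℕ) + 1 = b.2)) ∨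
  ((b.2 : ℕ) = b'.2 ∧ ((b.1 : ℕ) + 1 = b'.1 ∨ (b'.1 : ℕ) + 1 = b.1))

instance {w : ℕ} (b b' : Fin 4 × Fin w) : Decidable (Adjb b b') := by
  unfold Adjb; infer_instance

def stepc {w : ℕ} (c : Fin 4 × Fin w → ℕ) (X : Finset (Fin 4 × Fin w)) :
    Finset (Fin 4 × Fin w) :=
  X ∪ univ.filter (fun b => c b ≤ (X.filter (fun b' => Adjb b' b)).card)

def closc {w : ℕ} (c : Fin 4 × Fin w → ℕ) (X : Finset (Fin 4 × Fin w)) :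
    Finset (Fin 4 × Fin w) :=
  (stepc c)^[4 * w + 1] X

lemma subset_stepc {w : ℕ} (c : Fin 4 × Fin w → ℕ) (X : Finset (Fin 4 × Fin w)) :
    X ⊆ stepc c X := Finset.subset_union_left

lemma iterate_fixed {α : Type*} [Fintype α] [DecidableEq α]
    (f : Finset α → Finset α) (hf : ∀ s, s ⊆ f s) (X : Finset α) {N : ℕ}
    (hN : Fintype.card α < N) : f (f^[N] X) = f^[N] X := by
  by_cases hfix : ∃ j < N, f (f^[j] X) = f^[j] X
  · rcases hfix with ⟨j, hj, hfj⟩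
    have key : ∀ l, f^[j + l] X = f^[j] X := by
      intro l
      induction l with
      | zero => rfl
      | succ l ih => rw [Nat.add_succ, Function.iterate_succ_apply', ih, hfj]
    have h1 : f^[N] X = f^[j] X := by
      have := key (N - j); rwa [Nat.add_sub_cancel' (le_of_lt hj)] at this
    rw [h1, hfj]
  · exfalso
    push_neg at hfix
    have grow : ∀ k ≤ N, k ≤ (f^[k] X).card := by
      intro k hk
      induction k with
      | zero => exact Nat.zero_le _
      | succ k ih =>
        have hlt : (f^[k] X).card < (f^[k+1] X).card := by
          rw [Function.iterate_succ_apply']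
          exact Finset.card_lt_card
            (Finset.ssubset_iff_subset_ne.mpr ⟨hf _, fun h => hfix k (Nat.lt_of_succ_le hk) h.symm⟩)
        exact Nat.succ_le_of_lt (lt_of_le_of_lt (ih (Nat.le_of_succ_le hk)) hlt)
    have := grow N le_rfl
    have h2 : (f^[N] X).card ≤ Fintype.card α := Finset.card_le_univ _
    omega

lemma stepc_closc {w : ℕ} (c : Fin 4 × Fin w → ℕ) (X : Finset (Fin 4 × Fin w)) :
    stepc c (closc c X) = closc c X := by
  have hcard : Fintype.card (Fin 4 × Fin w) < 4 * w + 1 := by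
    rw [Fintype.card_prod, Fintype.card_fin, Fintype.card_fin]; omega
  exact iterate_fixed _ (subset_stepc c) X hcard

lemma subset_closc {w : ℕ} (c : Fin 4 × Fin w → ℕ) (X : Finset (Fin 4 × Fin w)) :
    X ⊆ closc c X := by
  unfold closc
  generalize 4 * w + 1 = N
  induction N with
  | zero => exact fun _ h => h
  | succ N ih => exact ih.trans (by rw [Function.iterate_succ_apply']; exact subset_stepc c _)

lemma closc_closed {w : ℕ} (c : Fin 4 × Fin w → ℕ) (X : Finset (Fin 4 × Fin w))
    {b : Fin 4 × Fin w} (h : c b ≤ ((closc c X).filter (fun b' => Adjb b' b)).card) :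
    b ∈ closc c X := by
  rw [← stepc_closc c X]
  exact Finset.mem_union_right _ (Finset.mem_filter.mpr ⟨Finset.mem_univ _, h⟩)

/-! ### Transfer -/

section Transfer

def emb {m w a : ℕ} (haw : a + w ≤ m) (b : Fin 4 × Fin w) : Fin 4 × Fin m :=
  (b.1, ⟨a + b.2.val, by omega⟩)

lemma emb_inj {m w a : ℕ} (haw : a + w ≤ m) : Function.Injective (emb haw) := by
  intro u v h
  have h1 := congrArg Prod.fst h
  have h2 := congrArg (fun p => ((p.2 : Fin m) : ℕ)) h
  simp only [emb] at h1 h2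
  exact Prod.ext h1 (Fin.ext (by omega))

theorem transfer {m w a : ℕ} (haw : a + w ≤ m) (c : Fin 4 × Fin w → ℕ) (S : Finset (Fin 4 × Fin m))
    (hout : ∀ b : Fin 4 × Fin w, ∃ out : Finset (Fin 4 × Fin m),
      out.card + c b ≤ 3 ∧
      ∀ u, (gridGraph 4 m).Adj u (emb haw b) →
        (∃ b', u = emb haw b' ∧ Adjb b' b) ∨ u ∈ out)
    (hperc : Percolates (gridGraph 4 m) 3 (↑S)) :
    closc c (univ.filter (fun b => emb haw b ∈ S)) = univ := by
  classical
  set X := univ.filter (fun b => emb haw b ∈ S) with hX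
  have main : ∀ k, ∀ b : Fin 4 × Fin w, emb haw b ∈ It (gridGraph 4 m) (↑S) k →
      b ∈ closc c X := by
    intro k
    induction k with
    | zero =>
      intro b hb
      exact subset_closc c X (Finset.mem_filter.mpr ⟨Finset.mem_univ _, hb⟩)
    | succ k ih =>
      intro b hb
      rcases hb with hb | ⟨T, hT3, hTall⟩
      · exact ih b hb
      rcases hout b with ⟨out, hcard, hcover⟩
      -- the part of T inside the block
      set Tin := T.filter (fun u => ∃ b', u = emb haw b' ∧ Adjb b' b) with hTin
      have hTsplit : T ⊆ Tin ∪ (T.filter (fun u => u ∈ out)) := by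
        intro u hu
        rcases hcover u (hTall u hu).1 with h | h
        · exact Finset.mem_union_left _ (Finset.mem_filter.mpr ⟨hu, h⟩)
        · exact Finset.mem_union_right _ (Finset.mem_filter.mpr ⟨hu, h⟩)
      have hcard2 : c b ≤ Tin.card := by
        have h1 : T.card ≤ Tin.card + (T.filter (fun u => u ∈ out)).card :=
          le_trans (Finset.card_le_card hTsplit) (Finset.card_union_le _ _)
        have h2 : (T.filter (fun u => u ∈ out)).card ≤ out.card :=
          Finset.card_le_card (fun u hu => (Finset.mem_filter.mp hu).2)
        omega
      -- map Tin into the block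
      have himg : ∀ u ∈ Tin, ∃ b', u = emb haw b' ∧ Adjb b' b ∧ b' ∈ closc c X := by
        intro u hu
        rcases (Finset.mem_filter.mp hu).2 with ⟨b', rfl, hadj⟩
        exact ⟨b', rfl, hadj, ih b' (hTall _ (Finset.mem_filter.mp hu).1).2⟩
      choose g hg1 hg2 hg3 using himg
      apply closc_closed
      refine le_trans hcard2 ?_
      rw [← Finset.card_attach (s := Tin)]
      apply Finset.card_le_card_of_injOn (fun u => g u.1 u.2)
      · intro u _
        exact Finset.mem_filter.mpr ⟨Finset.mem_coe.mp (Finset.mem_coe.mpr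
          (hg3 u.1 u.2)), hg2 u.1 u.2⟩
      · intro u _ v _ huv
        have := (hg1 u.1 u.2).trans (congrArg (emb haw) huv)
        rw [← hg1 v.1 v.2] at this
        exact Subtype.ext this
  apply Finset.eq_univ_of_forall
  intro b
  rcases infected_exists _ (hperc (emb haw b)) with ⟨k, hk⟩
  exact main k b hk

end Transfer


lemma hout_master {m w a : ℕ} (haw : a + w ≤ m) (c : Fin 4 × Fin w → ℕ)
    (hc : ∀ b : Fin 4 × Fin w,
      c b + ((if (b.2 : ℕ) = 0 ∧ 0 < a then 1 else 0) +
             (if (b.2 : ℕ) = w - 1 ∧ a + w < m then 1 else 0)) ≤ 3) :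
    ∀ b : Fin 4 × Fin w, ∃ out : Finset (Fin 4 × Fin m),
      out.card + c b ≤ 3 ∧
      ∀ u, (gridGraph 4 m).Adj u (emb haw b) →
        (∃ b', u = emb haw b' ∧ Adjb b' b) ∨ u ∈ out := by
  classical
  intro b
  have hb2 : (b.2 : ℕ) < w := b.2.isLt
  set outL : Finset (Fin 4 × Fin m) :=
    if h : (b.2 : ℕ) = 0 ∧ 0 < a then {(b.1, ⟨a - 1, by omega⟩)} else ∅ with houtL
  set outR : Finset (Fin 4 × Fin m) :=
    if h : (b.2 : ℕ) = w - 1 ∧ a + w < m then {(b.1, ⟨a + w, by omega⟩)} else ∅ with houtR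
  refine ⟨outL ∪ outR, ?_, ?_⟩
  · have hL : outL.card ≤ (if (b.2 : ℕ) = 0 ∧ 0 < a then 1 else 0) := by
      rw [houtL]; split_ifs <;> simp
    have hR : outR.card ≤ (if (b.2 : ℕ) = w - 1 ∧ a + w < m then 1 else 0) := by
      rw [houtR]; split_ifs <;> simp
    have := Finset.card_union_le outL outR
    have := hc b
    omega
  · intro u hu
    rw [grid_adj] at hu
    have hcol : (((emb haw b).2 : Fin m) : ℕ) = a + (b.2 : ℕ) := rfl
    have hrow : (((emb haw b).1 : Fin 4) : ℕ) = (b.1 : ℕ) := rfl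
    rcases hu with ⟨h1, h2 | h2⟩ | ⟨h1, h2⟩
    · -- same row, u's column is one less than b's
      rw [hcol] at h2
      rw [hrow] at h1
      by_cases hj : 0 < (b.2 : ℕ)
      · refine Or.inl ⟨(u.1, ⟨(b.2 : ℕ) - 1, by omega⟩), ?_, ?_⟩
        · refine Prod.ext rfl (Fin.ext ?_)
          show (u.2 : ℕ) = a + ((b.2 : ℕ) - 1)
          omega
        · unfold Adjb
          dsimp only
          omega
      · -- b is in the leftmost block column; u is outside on the left
        refine Or.inr (Finset.mem_union_left _ ?_)
        rw [houtL, dif_pos ⟨by omega, by omega⟩]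
        refine Finset.mem_singleton.mpr (Prod.ext (Fin.ext h1) (Fin.ext ?_))
        show (u.2 : ℕ) = a - 1
        omega
    · -- same row, u's column is one more than b's
      rw [hcol] at h2
      rw [hrow] at h1
      by_cases hj : (b.2 : ℕ) + 1 < w
      · refine Or.inl ⟨(u.1, ⟨(b.2 : ℕ) + 1, hj⟩), ?_, ?_⟩
        · refine Prod.ext rfl (Fin.ext ?_)
          show (u.2 : ℕ) = a + ((b.2 : ℕ) + 1)
          omega
        · unfold Adjb
          dsimp only
          omega
      · -- b is in the rightmost block column; u is outside on the right
        have hum : (u.2 : ℕ) < m := u.2.isLt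
        refine Or.inr (Finset.mem_union_right _ ?_)
        rw [houtR, dif_pos ⟨by omega, by omega⟩]
        refine Finset.mem_singleton.mpr (Prod.ext (Fin.ext h1) (Fin.ext ?_))
        show (u.2 : ℕ) = a + w
        omega
    · -- same column, rows adjacent
      rw [hcol] at h1
      rw [hrow] at h2
      refine Or.inl ⟨(u.1, b.2), ?_, ?_⟩
      · exact Prod.ext rfl (Fin.ext h1)
      · unfold Adjb
        dsimp only
        omega

lemma main_bound {m w a k : ℕ} (haw : a + w ≤ m)
    (c : Fin 4 × Fin w → ℕ)
    (hc : ∀ b : Fin 4 × Fin w,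
      c b + ((if (b.2 : ℕ) = 0 ∧ 0 < a then 1 else 0) +
             (if (b.2 : ℕ) = w - 1 ∧ a + w < m then 1 else 0)) ≤ 3)
    (hdec : ∀ X : Finset (Fin 4 × Fin w), X.card ≤ k → closc c X ≠ univ)
    (S : Finset (Fin 4 × Fin m)) (hperc : Percolates (gridGraph 4 m) 3 ↑S)
    (P : Fin 4 × Fin m → Prop) [DecidablePred P]
    (hP : ∀ b : Fin 4 × Fin w, P (emb haw b)) :
    k + 1 ≤ (S.filter P).card := by
  classical
  have htr := transfer haw c S (hout_master haw c hc) hperc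
  set X := univ.filter (fun b => emb haw b ∈ S) with hX
  have hcard : X.card ≤ (S.filter P).card := by
    apply Finset.card_le_card_of_injOn (emb haw)
    · intro b hb
      rw [Finset.mem_coe, Finset.mem_filter] at hb
      exact Finset.mem_filter.mpr ⟨hb.2, hP b⟩
    · exact fun x _ y _ h => emb_inj haw h
  by_contra hlt
  push_neg at hlt
  exact hdec X (by omega) htr

set_option maxRecDepth 100000 in
lemma decA : ∀ X : Finset (Fin 4 × Fin 1), X.card ≤ 2 →
    closc (fun _ => 2) X ≠ univ := by decide

set_option maxRecDepth 100000 in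
lemma decB : ∀ X : Finset (Fin 4 × Fin 1), X.card ≤ 0 →
    closc (fun _ => 1) X ≠ univ := by decide

set_option maxRecDepth 100000 in
lemma decC : ∀ X : Finset (Fin 4 × Fin 2), X.card ≤ 2 →
    closc (fun _ => 2) X ≠ univ := by decide

def assemble (X0 X1 X2 : Finset (Fin 4 × Fin 1)) : Finset (Fin 4 × Fin 3) :=
  X0.image (fun p => (p.1, (0 : Fin 3))) ∪ X1.image (fun p => (p.1, (1 : Fin 3))) ∪
    X2.image (fun p => (p.1, (2 : Fin 3)))

lemma exists_assemble (X : Finset (Fin 4 × Fin 3)) :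
    ∃ X0 X1 X2, X = assemble X0 X1 X2 := by
  classical
  refine ⟨univ.filter (fun p => (p.1, (0 : Fin 3)) ∈ X),
    univ.filter (fun p => (p.1, (1 : Fin 3)) ∈ X),
    univ.filter (fun p => (p.1, (2 : Fin 3)) ∈ X), ?_⟩
  ext ⟨r, c⟩
  simp only [assemble, Finset.mem_union, Finset.mem_image, Finset.mem_filter,
    Finset.mem_univ, true_and]
  constructor
  · intro h
    fin_cases c
    · exact Or.inl (Or.inl ⟨(r, 0), h, rfl⟩)
    · exact Or.inl (Or.inr ⟨(r, 0), h, rfl⟩)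
    · exact Or.inr ⟨(r, 0), h, rfl⟩
  · rintro ((⟨p, hp, he⟩ | ⟨p, hp, he⟩) | ⟨p, hp, he⟩) <;>
      (cases he; exact hp)

set_option maxRecDepth 100000 in
set_option maxHeartbeats 4000000 in
set_option synthInstance.maxHeartbeats 1000000 in
set_option synthInstance.maxSize 4096 in
lemma decD0 : ∀ X0 X1 X2 : Finset (Fin 4 × Fin 1),
    (assemble X0 X1 X2).card ≤ 4 →
    3 ≤ ((assemble X0 X1 X2).filter (fun b => (b.2 : ℕ) = 0 ∨ (b.2 : ℕ) = 1)).card →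
    3 ≤ ((assemble X0 X1 X2).filter (fun b => (b.2 : ℕ) = 1 ∨ (b.2 : ℕ) = 2)).card →
    closc (fun b => if (b.2 : ℕ) = 1 then 3 else 2) (assemble X0 X1 X2) ≠ univ := by
  decide

lemma decD : ∀ X : Finset (Fin 4 × Fin 3), X.card ≤ 4 →
    3 ≤ (X.filter (fun b => (b.2 : ℕ) = 0 ∨ (b.2 : ℕ) = 1)).card →
    3 ≤ (X.filter (fun b => (b.2 : ℕ) = 1 ∨ (b.2 : ℕ) = 2)).card →
    closc (fun b => if (b.2 : ℕ) = 1 then 3 else 2) X ≠ univ := by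
  intro X h1 h2 h3
  obtain ⟨X0, X1, X2, rfl⟩ := exists_assemble X
  exact decD0 X0 X1 X2 h1 h2 h3

lemma filter_card_transfer {m w a : ℕ} (hw : 0 < w) (haw : a + w ≤ m)
    (S : Finset (Fin 4 × Fin m)) (p : Fin 4 × Fin w → Prop) [DecidablePred p]
    (q : Fin 4 × Fin m → Prop) [DecidablePred q]
    (hpq : ∀ v : Fin 4 × Fin m, q v → a ≤ (v.2 : ℕ) ∧ (v.2 : ℕ) < a + w ∧
      p (v.1, ⟨min ((v.2 : ℕ) - a) (w - 1), by omega⟩)) :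
    (S.filter q).card ≤
      ((univ.filter (fun b => emb haw b ∈ S)).filter p).card := by
  classical
  apply Finset.card_le_card_of_injOn
    (fun v => (v.1, (⟨min ((v.2 : ℕ) - a) (w - 1), by omega⟩ : Fin w)))
  · intro v hv
    rw [Finset.mem_coe, Finset.mem_filter] at hv
    obtain ⟨hvS, hvq⟩ := hv
    obtain ⟨ha1, ha2, hp⟩ := hpq v hvq
    refine Finset.mem_filter.mpr ⟨Finset.mem_filter.mpr ⟨Finset.mem_univ _, ?_⟩, hp⟩
    have he : emb haw (v.1, (⟨min ((v.2 : ℕ) - a) (w - 1), by omega⟩ : Fin w)) = v := by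
      refine Prod.ext rfl (Fin.ext ?_)
      show a + min ((v.2 : ℕ) - a) (w - 1) = (v.2 : ℕ)
      omega
    rw [he]
    exact hvS
  · intro u hu v hv huv
    rw [Finset.mem_coe, Finset.mem_filter] at hu hv
    obtain ⟨hu1, hu2, -⟩ := hpq u hu.2
    obtain ⟨hv1, hv2, -⟩ := hpq v hv.2
    have h1 := congrArg Prod.fst huv
    have h2 := congrArg (fun z => ((z.2 : Fin w) : ℕ)) huv
    dsimp at h1 h2
    exact Prod.ext h1 (Fin.ext (by omega))

end P16

theorem stmt_16 (m : ℕ) (hm : 4 ≤ m) (S : Finset (Fin 4 × Fin m))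
    (hmin : S.card = percNum (Fin 4 × Fin m) (gridGraph 4 m) 3)
    (hperc : Percolates (gridGraph 4 m) 3 (↑S))
    (hcons : (¬ ∃ u v z, u ∈ S ∧ v ∈ S ∧ z ∈ S ∧
      (gridGraph 4 m).Adj u v ∧ (gridGraph 4 m).Adj v z ∧ u ≠ z ∧
      IsBoundary (gridGraph 4 m) u ∧ IsBoundary (gridGraph 4 m) v ∧
      IsBoundary (gridGraph 4 m) z)) :
    (3 ≤ (S.filter (fun v => (v.2 : ℕ) = 0)).card ∧
      3 ≤ (S.filter (fun v => (v.2 : ℕ) = m - 1)).card) ∧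
    (∀ i : ℕ, 2 ≤ i → i ≤ m - 1 →
      1 ≤ (S.filter (fun v => (v.2 : ℕ) = i - 1)).card) ∧
    (∀ i : ℕ, 2 ≤ i → i ≤ m - 1 →
      3 ≤ (S.filter (fun v => (v.2 : ℕ) = i - 1 ∨ (v.2 : ℕ) = i)).card) ∧
    (∀ i : ℕ, 2 ≤ i → i ≤ m - 2 →
      5 ≤ (S.filter (fun v =>
        (v.2 : ℕ) = i - 1 ∨ (v.2 : ℕ) = i ∨ (v.2 : ℕ) = i + 1)).card) := by
  classical
  have part2 : ∀ i : ℕ, 2 ≤ i → i ≤ m - 1 →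
      1 ≤ (S.filter (fun v => (v.2 : ℕ) = i - 1)).card := by
    intro i h2 h3
    exact P16.main_bound (m := m) (w := 1) (a := i - 1) (k := 0) (by omega) (fun _ => 1)
      (by intro b; have := b.2.isLt; split_ifs <;> omega)
      P16.decB S hperc _
      (by intro b; have := b.2.isLt; show ((i - 1) + (b.2 : ℕ)) = i - 1; omega)
  have part3 : ∀ i : ℕ, 2 ≤ i → i ≤ m - 1 →
      3 ≤ (S.filter (fun v => (v.2 : ℕ) = i - 1 ∨ (v.2 : ℕ) = i)).card := by
    intro i h2 h3
    exact P16.main_bound (m := m) (w := 2) (a := i - 1) (k := 2) (by omega) (fun _ => 2)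
      (by intro b; have := b.2.isLt; split_ifs <;> omega)
      P16.decC S hperc _
      (by intro b; have := b.2.isLt
          show ((i - 1) + (b.2 : ℕ) = i - 1 ∨ (i - 1) + (b.2 : ℕ) = i); omega)
  refine ⟨⟨?_, ?_⟩, part2, part3, ?_⟩
  · exact P16.main_bound (m := m) (w := 1) (a := 0) (k := 2) (by omega) (fun _ => 2)
      (by intro b; have := b.2.isLt; split_ifs <;> omega)
      P16.decA S hperc _
      (by intro b; have := b.2.isLt; show (0 + (b.2 : ℕ)) = 0; omega)
  · exact P16.main_bound (m := m) (w := 1) (a := m - 1) (k := 2) (by omega) (fun _ => 2)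
      (by intro b; have := b.2.isLt; split_ifs <;> omega)
      P16.decA S hperc _
      (by intro b; have := b.2.isLt; show ((m - 1) + (b.2 : ℕ)) = m - 1; omega)
  · -- part (d)
    intro i h2 h3
    have haw : (i - 1) + 3 ≤ m := by omega
    set c : Fin 4 × Fin 3 → ℕ := fun b => if (b.2 : ℕ) = 1 then 3 else 2 with hc
    have hcD : ∀ b : Fin 4 × Fin 3,
        c b + ((if (b.2 : ℕ) = 0 ∧ 0 < i - 1 then 1 else 0) +
               (if (b.2 : ℕ) = 3 - 1 ∧ (i - 1) + 3 < m then 1 else 0)) ≤ 3 := by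
      intro b; have := b.2.isLt; rw [hc]; dsimp only; split_ifs <;> omega
    have htr := P16.transfer haw c S (P16.hout_master haw c hcD) hperc
    have hXle : (Finset.univ.filter (fun b => P16.emb haw b ∈ S)).card ≤
        (S.filter (fun v =>
          (v.2 : ℕ) = i - 1 ∨ (v.2 : ℕ) = i ∨ (v.2 : ℕ) = i + 1)).card := by
      apply Finset.card_le_card_of_injOn (P16.emb haw)
      · intro b hb
        rw [Finset.mem_coe, Finset.mem_filter] at hb
        refine Finset.mem_filter.mpr ⟨hb.2, ?_⟩
        have := b.2.isLt
        show ((i - 1) + (b.2 : ℕ) = i - 1 ∨ (i - 1) + (b.2 : ℕ) = i ∨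
          (i - 1) + (b.2 : ℕ) = i + 1)
        omega
      · exact fun x _ y _ h => P16.emb_inj haw h
    have hL : 3 ≤ ((Finset.univ.filter (fun b => P16.emb haw b ∈ S)).filter
        (fun b => (b.2 : ℕ) = 0 ∨ (b.2 : ℕ) = 1)).card := by
      refine le_trans (part3 i h2 (by omega)) ?_
      apply P16.filter_card_transfer (by omega) haw S
      intro v hv
      rcases hv with hv | hv <;>
        exact ⟨by omega, by omega, by
          show (min ((v.2 : ℕ) - (i - 1)) (3 - 1) = 0 ∨
            min ((v.2 : ℕ) - (i - 1)) (3 - 1) = 1); omega⟩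
    have hR : 3 ≤ ((Finset.univ.filter (fun b => P16.emb haw b ∈ S)).filter
        (fun b => (b.2 : ℕ) = 1 ∨ (b.2 : ℕ) = 2)).card := by
      have hp3 := part3 (i + 1) (by omega) (by omega)
      rw [Nat.add_sub_cancel] at hp3
      refine le_trans hp3 ?_
      apply P16.filter_card_transfer (by omega) haw S
      intro v hv
      rcases hv with hv | hv <;>
        exact ⟨by omega, by omega, by
          show (min ((v.2 : ℕ) - (i - 1)) (3 - 1) = 1 ∨
            min ((v.2 : ℕ) - (i - 1)) (3 - 1) = 2); omega⟩
    by_contra hlt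
    push_neg at hlt
    exact P16.decD _ (by omega) hL hR htr
end
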